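/- arXiv:1512.03408 — 2 statements merged into one kernel-verified Lean document; each statement's English description precedes it below -/
import Mathlib

section
/- Let N be a complete nest and M a weakly closed subspace of B(H). Define φ(P) = ⋁{Q ∈ N : ∃ R ∈ N, R < P, Q B(H) R^⊥ ⊆ M}. Then for all P ∈ N, φ(P) B(H) P^⊥ ⊆ φ(P) B(H) (P_−)^⊥ ⊆ M, where P_− = ⋁{Q ∈ N : Q < P}. -/
/-- The order on orthogonal projections: `P ≤ Q` encoded as `P*Q = P ∧ Q*P = P`. -/
def opLe {H : Type} [NormedAddCommGroup H] [InnerProductSpace ℂ H]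
    (P Q : H →L[ℂ] H) : Prop := P * Q = P ∧ Q * P = P

/-- Strict order on projections. -/
def opLt {H : Type} [NormedAddCommGroup H] [InnerProductSpace ℂ H]
    (P Q : H →L[ℂ] H) : Prop := opLe P Q ∧ P ≠ Q

/-- A complete nest: a totally ordered complete sublattice of the lattice of orthogonal
projections on `H`, containing `0` and `1`.  Completeness means that every subset has a
least upper bound and a greatest lower bound (computed in the full projection lattice)
belonging to the nest. -/
structure IsNest {H : Type} [NormedAddCommGroup H] [InnerProductSpace ℂ H] [CompleteSpace H]
    (N : Set (H →L[ℂ] H)) : Prop where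
  proj : ∀ P ∈ N, IsSelfAdjoint P ∧ IsIdempotentElem P
  zero_mem : (0 : H →L[ℂ] H) ∈ N
  one_mem : (1 : H →L[ℂ] H) ∈ N
  total : ∀ P ∈ N, ∀ Q ∈ N, opLe P Q ∨ opLe Q P
  complete_sup : ∀ S ⊆ N, ∃ B ∈ N, (∀ P ∈ S, opLe P B) ∧
    ∀ C : H →L[ℂ] H, IsSelfAdjoint C → IsIdempotentElem C → (∀ P ∈ S, opLe P C) → opLe B C
  complete_inf : ∀ S ⊆ N, ∃ B ∈ N, (∀ P ∈ S, opLe B P) ∧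
    ∀ C : H →L[ℂ] H, IsSelfAdjoint C → IsIdempotentElem C → (∀ P ∈ S, opLe C P) → opLe C B

/-- `B` is the supremum, taken in the nest `N`, of the subset `S` of `N`. -/
def IsNestSup {H : Type} [NormedAddCommGroup H] [InnerProductSpace ℂ H]
    (N S : Set (H →L[ℂ] H)) (B : H →L[ℂ] H) : Prop :=
  B ∈ N ∧ (∀ P ∈ S, opLe P B) ∧ ∀ C ∈ N, (∀ P ∈ S, opLe P C) → opLe B C

/-- `B` is the infimum, taken in the nest `N`, of the subset `S` of `N`. -/
def IsNestInf {H : Type} [NormedAddCommGroup H] [InnerProductSpace ℂ H]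
    (N S : Set (H →L[ℂ] H)) (B : H →L[ℂ] H) : Prop :=
  B ∈ N ∧ (∀ P ∈ S, opLe B P) ∧ ∀ C ∈ N, (∀ P ∈ S, opLe C P) → opLe C B

/-- The nest algebra `T(N)` of a nest `N`: all `T` with `P^⊥ T P = 0` for all `P ∈ N`. -/
def nestAlg {H : Type} [NormedAddCommGroup H] [InnerProductSpace ℂ H]
    (N : Set (H →L[ℂ] H)) : Set (H →L[ℂ] H) :=
  {T | ∀ P ∈ N, (1 - P) * T * P = 0}

/-- A subset of `B(H)` is weakly closed if it is closed in the weak operator topology. -/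
def WClosed {H : Type} [NormedAddCommGroup H] [InnerProductSpace ℂ H] [CompleteSpace H]
    (M : Set (H →L[ℂ] H)) : Prop :=
  IsClosed ((ContinuousLinearMapWOT.ofCLM : (H →L[ℂ] H) → (H →WOT[ℂ] H)) '' M)

/-- The closure of a subset of `B(H)` in the weak operator topology. -/
def wClosure {H : Type} [NormedAddCommGroup H] [InnerProductSpace ℂ H] [CompleteSpace H]
    (S : Set (H →L[ℂ] H)) : Set (H →L[ℂ] H) :=
  (ContinuousLinearMapWOT.ofCLM : (H →L[ℂ] H) → (H →WOT[ℂ] H)) ⁻¹' (closure ((ContinuousLinearMapWOT.ofCLM : (H →L[ℂ] H) → (H →WOT[ℂ] H)) '' S))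

/-- The rank-one operator `x ⊗ y : z ↦ ⟨z,x⟩y` (inner product linear in its first variable,
i.e. `⟨z,x⟩ = ⟪x,z⟫` in Mathlib's convention). -/
noncomputable def rankOne {H : Type} [NormedAddCommGroup H] [InnerProductSpace ℂ H]
    (x y : H) : H →L[ℂ] H :=
  (innerSL ℂ x).smulRight y
/-- The set `{Q ∈ N : ∃ R ∈ N, R < P, Q B(H) R^⊥ ⊆ M}` whose supremum defines `φ(P)`. -/
def phiSet {H : Type} [NormedAddCommGroup H] [InnerProductSpace ℂ H] [CompleteSpace H]
    (N : Set (H →L[ℂ] H)) (M : Submodule ℂ (H →L[ℂ] H)) (P : H →L[ℂ] H) :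
    Set (H →L[ℂ] H) :=
  {Q | Q ∈ N ∧ ∃ R ∈ N, opLt R P ∧ ∀ A : H →L[ℂ] H, Q * A * (1 - R) ∈ M}

/-! The first inclusion is `P^⊥ = P^⊥ (P_−)^⊥`, valid because `P_− ≤ P`. For the second, every
`Q` in the set defining `φ(P)` comes with some `R < P`, hence `R ≤ P_−`, so
`Q A (P_−)^⊥ = Q (A (P_−)^⊥) R^⊥ ∈ M`. As the nest is complete, `φ(P)` is also the supremum of
this chain among all projections, and such a supremum is the strong limit of the chain. Hence
`φ(P) A (P_−)^⊥` is a weak-operator limit of elements of `M`. -/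

open Filter Topology

section Projections

variable {H : Type} [NormedAddCommGroup H] [InnerProductSpace ℂ H]

theorem one_sub_mul_one_sub_of_opLe {P Q : H →L[ℂ] H} (h : opLe Q P) :
    (1 - P) * (1 - Q) = 1 - P := by
  rw [sub_mul, one_mul, mul_sub, mul_one, h.2]
  abel

variable [CompleteSpace H]

theorem opLe_iff_le {P Q : H →L[ℂ] H} (hP : IsStarProjection P) (hQ : IsStarProjection Q) :
    opLe P Q ↔ P ≤ Q :=
  ⟨fun h => hP.le_of_mul_eq_left hQ h.1,
    fun h => hQ.mul_right_and_mul_left_of_nonneg_of_le hP.nonneg h⟩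

theorem range_le_range_of_le {P Q : H →L[ℂ] H} (hP : IsStarProjection P)
    (hQ : IsStarProjection Q) (h : P ≤ Q) :
    LinearMap.range (P : H →ₗ[ℂ] H) ≤ LinearMap.range (Q : H →ₗ[ℂ] H) := by
  rintro _ ⟨y, rfl⟩
  refine ⟨P y, ?_⟩
  change (Q * P) y = P y
  rw [(hQ.mul_right_and_mul_left_of_nonneg_of_le hP.nonneg h).2]

theorem norm_apply_sub_le_of_apply_eq {Q B : H →L[ℂ] H} (hQ : IsStarProjection Q)
    (hB : IsStarProjection B) (hQB : Q ≤ B) {u : H} (hu : Q u = u) (x : H) :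
    ‖Q x - B x‖ ≤ ‖B x - u‖ := by
  have hQB' : Q * B = Q := (hB.mul_right_and_mul_left_of_nonneg_of_le hQ.nonneg hQB).1
  have key : Q x - B x = -((1 - Q) (B x - u)) := by
    have hQx : Q x = Q (B x) := (congrArg (· x) hQB').symm
    rw [hQx, sub_apply, one_apply_eq_self, map_sub, hu]
    abel
  rw [key, norm_neg]
  exact (1 - Q).le_of_opNorm_le hQ.one_sub.norm_le _ |>.trans_eq (one_mul _)

theorem tendsto_atTop_apply_of_isLeast {S : Set (H →L[ℂ] H)} [Nonempty S]
    (hS : ∀ Q ∈ S, IsStarProjection Q) (hchain : IsChain (· ≤ ·) S) {B : H →L[ℂ] H}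
    (hB : IsLeast (upperBounds S ∩ {P | IsStarProjection P}) B) (x : H) :
    Tendsto (fun Q : S => (Q : H →L[ℂ] H) x) atTop (𝓝 (B x)) := by
  have := hchain.directedOn.isDirectedOrder
  set K₀ := ⨆ Q : S, LinearMap.range ((Q : H →L[ℂ] H) : H →ₗ[ℂ] H)
  set K := K₀.topologicalClosure
  -- The projection onto the closed span of the ranges bounds `S`, so `B x` lies in that span.
  have hK : B ≤ K.starProjection := by
    refine hB.2 ⟨fun Q hQ => (hS Q hQ).le_of_mul_eq_right isStarProjection_starProjection ?_,
      isStarProjection_starProjection⟩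
    ext y
    exact K.starProjection_eq_self_iff.2 <| K₀.le_topologicalClosure <|
      le_iSup (fun Q : S => LinearMap.range ((Q : H →L[ℂ] H) : H →ₗ[ℂ] H)) ⟨Q, hQ⟩ ⟨y, rfl⟩
  have hBx : B x ∈ closure (K₀ : Set H) := by
    rw [← Submodule.topologicalClosure_coe]
    change B x ∈ K
    rw [← K.starProjection_eq_self_iff, ← mul_apply_eq_comp,
      (isStarProjection_starProjection.mul_right_and_mul_left_of_nonneg_of_le hB.1.2.nonneg hK).2]
  have hdir : Directed (· ≤ ·) fun Q : S => LinearMap.range ((Q : H →L[ℂ] H) : H →ₗ[ℂ] H) :=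
    Monotone.directed_le fun Q R hQR => range_le_range_of_le (hS Q Q.2) (hS R R.2) hQR
  refine Metric.tendsto_nhds.2 fun ε hε => ?_
  obtain ⟨u, hu, hBu⟩ := Metric.mem_closure_iff.1 hBx ε hε
  obtain ⟨Q₀, v, rfl⟩ := (Submodule.mem_iSup_of_directed _ hdir).1 hu
  filter_upwards [eventually_ge_atTop Q₀] with Q hQ
  have hQu : (Q : H →L[ℂ] H) ((Q₀ : H →L[ℂ] H) v) = (Q₀ : H →L[ℂ] H) v := by
    rw [← mul_apply_eq_comp,
      ((hS Q Q.2).mul_right_and_mul_left_of_nonneg_of_le (hS Q₀ Q₀.2).nonneg hQ).2]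
  rw [dist_eq_norm]
  exact (norm_apply_sub_le_of_apply_eq (hS Q Q.2) hB.1.2 (hB.1.1 Q.2) hQu x).trans_lt
    (by rwa [← dist_eq_norm])

end Projections

section WeakOperatorTopology

variable {H : Type} [NormedAddCommGroup H] [InnerProductSpace ℂ H] [CompleteSpace H]
  {α : Type*} {l : Filter α}

theorem tendsto_ofCLM_mul_right_of_tendsto_apply {f : α → H →L[ℂ] H} {B : H →L[ℂ] H}
    (hf : ∀ x, Tendsto (fun a => f a x) l (𝓝 (B x))) (T : H →L[ℂ] H) :
    Tendsto (fun a => ContinuousLinearMapWOT.ofCLM (f a * T)) l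
      (𝓝 (ContinuousLinearMapWOT.ofCLM (B * T))) := by
  rw [ContinuousLinearMapWOT.tendsto_iff_forall_inner_apply_tendsto]
  exact fun x y => tendsto_const_nhds.inner (hf (T x))

theorem WClosed.mem_of_tendsto {M : Set (H →L[ℂ] H)} (hM : WClosed M) [l.NeBot]
    {f : α → H →L[ℂ] H} {T : H →L[ℂ] H}
    (hf : Tendsto (fun a => ContinuousLinearMapWOT.ofCLM (f a)) l
      (𝓝 (ContinuousLinearMapWOT.ofCLM T)))
    (hfM : ∀ᶠ a in l, f a ∈ M) : T ∈ M := by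
  obtain ⟨T', hT'M, hT'⟩ := IsClosed.mem_of_tendsto hM hf (hfM.mono fun a ha => ⟨f a, ha, rfl⟩)
  rwa [← ContinuousLinearMapWOT.ofCLM_injective hT']

end WeakOperatorTopology

namespace IsNest

variable {H : Type} [NormedAddCommGroup H] [InnerProductSpace ℂ H] [CompleteSpace H]
  {N : Set (H →L[ℂ] H)}

theorem isStarProjection (hN : IsNest N) {P : H →L[ℂ] H} (hP : P ∈ N) : IsStarProjection P :=
  ⟨(hN.proj P hP).2, (hN.proj P hP).1⟩

theorem isChain (hN : IsNest N) : IsChain (· ≤ ·) N := fun P hP Q hQ _ =>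
  (hN.total P hP Q hQ).imp
    (opLe_iff_le (hN.isStarProjection hP) (hN.isStarProjection hQ)).1
    (opLe_iff_le (hN.isStarProjection hQ) (hN.isStarProjection hP)).1

theorem isLeast_of_isNestSup (hN : IsNest N) {S : Set (H →L[ℂ] H)} (hSN : S ⊆ N)
    {B : H →L[ℂ] H} (hB : IsNestSup N S B) :
    IsLeast (upperBounds S ∩ {P | IsStarProjection P}) B := by
  have hB₀ := hN.isStarProjection hB.1
  refine ⟨⟨fun Q hQ => (opLe_iff_le (hN.isStarProjection (hSN hQ)) hB₀).1 (hB.2.1 Q hQ), hB₀⟩,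
    ?_⟩
  rintro C ⟨hCS, hC⟩
  obtain ⟨B', hB'N, hB'S, hB'least⟩ := hN.complete_sup S hSN
  have hB' := hN.isStarProjection hB'N
  have hBB' : B ≤ B' := (opLe_iff_le hB₀ hB').1 (hB.2.2 B' hB'N hB'S)
  refine hBB'.trans <| (opLe_iff_le hB' hC).1 <| hB'least C hC.isSelfAdjoint hC.isIdempotentElem
    fun Q hQ => (opLe_iff_le (hN.isStarProjection (hSN hQ)) hC).2 (hCS hQ)

theorem mul_mem_of_isNestSup (hN : IsNest N) {M : Submodule ℂ (H →L[ℂ] H)}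
    (hM : WClosed (M : Set (H →L[ℂ] H))) {S : Set (H →L[ℂ] H)} (hSN : S ⊆ N)
    {B : H →L[ℂ] H} (hB : IsNestSup N S B) {T : H →L[ℂ] H} (hST : ∀ Q ∈ S, Q * T ∈ M) :
    B * T ∈ M := by
  rcases S.eq_empty_or_nonempty with rfl | ⟨Q, hQ⟩
  · have hB0 : B = 0 := by simpa using (hB.2.2 0 hN.zero_mem (by simp)).1.symm
    simp [hB0]
  · have : Nonempty S := ⟨⟨Q, hQ⟩⟩
    have := (hN.isChain.mono hSN).directedOn.isDirectedOrder
    exact hM.mem_of_tendsto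
      (tendsto_ofCLM_mul_right_of_tendsto_apply (tendsto_atTop_apply_of_isLeast
        (fun Q hQ => hN.isStarProjection (hSN hQ)) (hN.isChain.mono hSN)
        (hN.isLeast_of_isNestSup hSN hB)) T)
      (Eventually.of_forall fun Q => hST Q Q.2)

end IsNest

/-- For a weakly closed subspace `M` of `B(H)` and `P ∈ N`,
`φ(P) B(H) P^⊥ ⊆ φ(P) B(H) (P_−)^⊥ ⊆ M`, where `P_− = ⋁{Q ∈ N : Q < P}`. -/
theorem phi_corner_subset
    {H : Type} [NormedAddCommGroup H] [InnerProductSpace ℂ H] [CompleteSpace H]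
    (N : Set (H →L[ℂ] H)) (hN : IsNest N) (M : Submodule ℂ (H →L[ℂ] H))
    (hM : WClosed (M : Set (H →L[ℂ] H)))
    (φ : (H →L[ℂ] H) → (H →L[ℂ] H))
    (hφ : ∀ P ∈ N, IsNestSup N (phiSet N M P) (φ P))
    (P Pm : H →L[ℂ] H) (hP : P ∈ N)
    (hPm : IsNestSup N {Q | Q ∈ N ∧ opLt Q P} Pm) :
    {X | ∃ A : H →L[ℂ] H, X = φ P * A * (1 - P)} ⊆
      {X | ∃ A : H →L[ℂ] H, X = φ P * A * (1 - Pm)} ∧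
    ∀ A : H →L[ℂ] H, φ P * A * (1 - Pm) ∈ M := by
  have hPmP : opLe Pm P := hPm.2.2 P hP fun Q hQ => hQ.2.1
  refine ⟨?_, fun A => ?_⟩
  · rintro _ ⟨A, rfl⟩
    refine ⟨A * (1 - P), ?_⟩
    rw [mul_assoc _ (A * (1 - P)), mul_assoc A, one_sub_mul_one_sub_of_opLe hPmP, ← mul_assoc]
  · rw [mul_assoc]
    refine hN.mul_mem_of_isNestSup hM (fun Q hQ => hQ.1) (hφ P hP)
      fun Q ⟨_, R, hRN, hRP, hRM⟩ => ?_
    have hR := hRM (A * (1 - Pm))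
    rwa [mul_assoc Q, mul_assoc A, one_sub_mul_one_sub_of_opLe (hPm.2.1 R ⟨hRN, hRP⟩),
      ← mul_assoc] at hR
end

section
/- Let N be a complete nest and L a weakly closed Lie T(N)-module. Then K_V(L) := weak closure of span{P T P^⊥ : P ∈ N, T ∈ L} is a weakly closed (associative) two-sided ideal of the nest algebra T(N). -/
/-!
For `S ∈ T(N)` and `P ∈ N` one has `P^⊥ S P = 0`, whence the identities
`S (P T P^⊥) = P [P S P, T] P^⊥` and `(P T P^⊥) S = P [T, P^⊥ S P^⊥] P^⊥`.
Both `P S P` and `P^⊥ S P^⊥` lie in `T(N)`, so for a Lie `T(N)`-module `L` the generators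
`P T P^⊥` form a set stable under multiplication by `T(N)` on either side, and so does their
span.
Multiplication is separately continuous in the weak operator topology, so the weak closure
inherits this, and it stays inside `T(N)` because `T(N)` is weakly closed.
-/

section RingIdentities

variable {R : Type*} [Ring R] {p s : R}

theorem mul_corner_eq_corner_commutator (hp : IsIdempotentElem p) (hs : (1 - p) * s * p = 0)
    (t : R) : s * (p * t * (1 - p)) = p * (p * s * p * t - t * (p * s * p)) * (1 - p) := by
  linear_combination (norm := noncomm_ring)
    hs * t * (1 - p) - hp.eq * s * p * t * (1 - p) - p * t * p * s * hp.eq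

theorem corner_mul_eq_corner_commutator (hp : IsIdempotentElem p) (hs : (1 - p) * s * p = 0)
    (t : R) : p * t * (1 - p) * s =
      p * (t * ((1 - p) * s * (1 - p)) - (1 - p) * s * (1 - p) * t) * (1 - p) := by
  linear_combination (norm := noncomm_ring)
    p * t * hs - p * t * (1 - p) * s * hp.eq - hp.eq * s * (1 - p) * t * (1 - p)

end RingIdentities

section SpanStability

variable {R A : Type*} [CommSemiring R] [Semiring A] [Algebra R A] {G : Set A} {s x : A}

theorem const_mul_mem_span (hG : ∀ y ∈ G, s * y ∈ G)
    (hx : x ∈ Submodule.span R G) : s * x ∈ Submodule.span R G :=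
  (Submodule.span_le (p := (Submodule.span R G).comap (LinearMap.mulLeft R s))).2
    (fun y hy => Submodule.subset_span (hG y hy)) hx

theorem mul_const_mem_span (hG : ∀ y ∈ G, y * s ∈ G)
    (hx : x ∈ Submodule.span R G) : x * s ∈ Submodule.span R G :=
  (Submodule.span_le (p := (Submodule.span R G).comap (LinearMap.mulRight R s))).2
    (fun y hy => Submodule.subset_span (hG y hy)) hx

end SpanStability

section NestAlgebra

variable {H : Type} [NormedAddCommGroup H] [InnerProductSpace ℂ H]
  {N : Set (H →L[ℂ] H)} {P Q S T : H →L[ℂ] H}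

theorem opLe.one_sub_mul_eq_zero (h : opLe P Q) : (1 - Q) * P = 0 := by
  rw [sub_mul, one_mul, h.2, sub_self]

theorem mul_mem_nestAlg (hS : S ∈ nestAlg N) (hT : T ∈ nestAlg N) : S * T ∈ nestAlg N :=
  fun Q hQ => by
    linear_combination (norm := noncomm_ring) (1 - Q) * S * hT Q hQ + hS Q hQ * T * Q

def nestAlgSubmodule (N : Set (H →L[ℂ] H)) : Submodule ℂ (H →L[ℂ] H) where
  carrier := nestAlg N
  add_mem' {S T} hS hT Q hQ := by rw [mul_add, add_mul, hS Q hQ, hT Q hQ, add_zero]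
  zero_mem' Q _ := by rw [mul_zero, zero_mul]
  smul_mem' c T hT Q hQ := by rw [mul_smul_comm, smul_mul_assoc, hT Q hQ, smul_zero]

variable [CompleteSpace H]

theorem proj_mem_nestAlg (hN : IsNest N) (hP : P ∈ N) : P ∈ nestAlg N := by
  intro Q hQ
  rcases hN.total P hP Q hQ with hPQ | hQP
  · rw [hPQ.one_sub_mul_eq_zero, zero_mul]
  · rw [mul_assoc, hQP.2, sub_mul, one_mul, (hN.proj Q hQ).2.eq, sub_self]

theorem one_sub_proj_mem_nestAlg (hN : IsNest N) (hP : P ∈ N) : 1 - P ∈ nestAlg N := by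
  intro Q hQ
  have hPQ : (1 - Q) * P * Q = 0 := proj_mem_nestAlg hN hP Q hQ
  linear_combination (norm := noncomm_ring) -hPQ - (hN.proj Q hQ).2.eq

theorem corner_mem_nestAlg (hN : IsNest N) (hP : P ∈ N) (T : H →L[ℂ] H) :
    P * T * (1 - P) ∈ nestAlg N := by
  intro Q hQ
  rcases hN.total P hP Q hQ with hPQ | hQP
  · simp only [← mul_assoc, hPQ.one_sub_mul_eq_zero, zero_mul]
  · simp only [mul_assoc, hQP.one_sub_mul_eq_zero, mul_zero]

end NestAlgebra

section Corners

variable {H : Type} [NormedAddCommGroup H] [InnerProductSpace ℂ H] [CompleteSpace H]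
  {N : Set (H →L[ℂ] H)} {L : Submodule ℂ (H →L[ℂ] H)} {S X : H →L[ℂ] H}

def nestCorners (N : Set (H →L[ℂ] H)) (L : Submodule ℂ (H →L[ℂ] H)) : Set (H →L[ℂ] H) :=
  {X | ∃ P ∈ N, ∃ T ∈ L, X = P * T * (1 - P)}

theorem nestCorners_subset_nestAlg (hN : IsNest N) : nestCorners N L ⊆ nestAlg N := by
  rintro _ ⟨P, hP, T, -, rfl⟩
  exact corner_mem_nestAlg hN hP T

theorem const_mul_mem_nestCorners (hN : IsNest N)
    (hLie : ∀ T ∈ L, ∀ S ∈ nestAlg N, T * S - S * T ∈ L)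
    (hS : S ∈ nestAlg N) (hX : X ∈ nestCorners N L) : S * X ∈ nestCorners N L := by
  obtain ⟨P, hP, T, hT, rfl⟩ := hX
  have hPSP : P * S * P ∈ nestAlg N :=
    mul_mem_nestAlg (mul_mem_nestAlg (proj_mem_nestAlg hN hP) hS) (proj_mem_nestAlg hN hP)
  refine ⟨P, hP, _, ?_, mul_corner_eq_corner_commutator (hN.proj P hP).2 (hS P hP) T⟩
  simpa only [neg_sub] using L.neg_mem (hLie T hT _ hPSP)

theorem mul_const_mem_nestCorners (hN : IsNest N)
    (hLie : ∀ T ∈ L, ∀ S ∈ nestAlg N, T * S - S * T ∈ L)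
    (hS : S ∈ nestAlg N) (hX : X ∈ nestCorners N L) : X * S ∈ nestCorners N L := by
  obtain ⟨P, hP, T, hT, rfl⟩ := hX
  have hPS : (1 - P) * S * (1 - P) ∈ nestAlg N := mul_mem_nestAlg
    (mul_mem_nestAlg (one_sub_proj_mem_nestAlg hN hP) hS) (one_sub_proj_mem_nestAlg hN hP)
  exact ⟨P, hP, _, hLie T hT _ hPS, corner_mul_eq_corner_commutator (hN.proj P hP).2 (hS P hP) T⟩

theorem span_nestCorners_subset_nestAlg (hN : IsNest N) :
    (Submodule.span ℂ (nestCorners N L) : Set (H →L[ℂ] H)) ⊆ nestAlg N :=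
  (Submodule.span_le (p := nestAlgSubmodule N)).2 (nestCorners_subset_nestAlg hN)

end Corners

section WeakClosure

open ContinuousLinearMapWOT

variable {H : Type} [NormedAddCommGroup H] [InnerProductSpace ℂ H] [CompleteSpace H]
  {M M' : Set (H →L[ℂ] H)} {A B S : H →L[ℂ] H}

theorem wClosed_iff_isClosed_preimage : WClosed M ↔ IsClosed (toCLM ⁻¹' M) := by
  rw [WClosed, Set.image_eq_preimage_of_inverse (g := toCLM) (fun _ => rfl) (fun _ => rfl)]

theorem wClosed_wClosure (M : Set (H →L[ℂ] H)) : WClosed (wClosure M) := by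
  rw [WClosed, wClosure, Set.image_preimage_eq _ ofCLM_surjective]
  exact isClosed_closure

theorem wClosure_minimal (hM : M ⊆ M') (hM' : WClosed M') : wClosure M ⊆ M' := fun _ hA =>
  ofCLM_injective.mem_set_image.1 (closure_minimal (Set.image_mono hM) hM' hA)

theorem wClosed_setOf_mul_mul_eq_zero (A B : H →L[ℂ] H) : WClosed {T | A * T * B = 0} := by
  rw [wClosed_iff_isClosed_preimage]
  have h : (toCLM : (H →WOT[ℂ] H) → H →L[ℂ] H) ⁻¹' {T | A * T * B = 0} =
      {X | ofCLM A * X * ofCLM B = 0} := by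
    ext X
    exact (toCLM_injective (σ := RingHom.id ℂ) (E := H) (F := H)).eq_iff
      (a := ofCLM A * X * ofCLM B) (b := 0)
  rw [h]
  exact isClosed_eq ((continuous_mul_const _).comp (continuous_const_mul _)) continuous_const

theorem wClosed_nestAlg (N : Set (H →L[ℂ] H)) : WClosed (nestAlg N) := by
  have h : nestAlg N = ⋂ P ∈ N, {T | (1 - P) * T * P = 0} := by
    ext T
    simp [nestAlg]
  rw [h, wClosed_iff_isClosed_preimage, Set.preimage_iInter₂]
  exact isClosed_biInter fun P _ =>
    wClosed_iff_isClosed_preimage.1 (wClosed_setOf_mul_mul_eq_zero _ _)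

theorem add_mem_wClosure (W : Submodule ℂ (H →L[ℂ] H))
    (hA : A ∈ wClosure (W : Set (H →L[ℂ] H))) (hB : B ∈ wClosure (W : Set (H →L[ℂ] H))) :
    A + B ∈ wClosure (W : Set (H →L[ℂ] H)) :=
  map_mem_closure₂ continuous_add hA hB <| by
    rintro _ ⟨X, hX, rfl⟩ _ ⟨Y, hY, rfl⟩
    exact ⟨X + Y, W.add_mem hX hY, rfl⟩

theorem smul_mem_wClosure (W : Submodule ℂ (H →L[ℂ] H)) (c : ℂ)
    (hA : A ∈ wClosure (W : Set (H →L[ℂ] H))) : c • A ∈ wClosure (W : Set (H →L[ℂ] H)) :=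
  map_mem_closure (f := (c • ·)) (continuous_const_smul c) hA <| by
    rintro _ ⟨X, hX, rfl⟩
    exact ⟨c • X, W.smul_mem c hX, rfl⟩

theorem const_mul_mem_wClosure (hM : ∀ X ∈ M, S * X ∈ M) (hA : A ∈ wClosure M) :
    S * A ∈ wClosure M :=
  map_mem_closure (f := (ofCLM S * ·)) (continuous_const_mul _) hA <| by
    rintro _ ⟨X, hX, rfl⟩
    exact ⟨S * X, hM X hX, rfl⟩

theorem mul_const_mem_wClosure (hM : ∀ X ∈ M, X * S ∈ M) (hA : A ∈ wClosure M) :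
    A * S ∈ wClosure M :=
  map_mem_closure (f := (· * ofCLM S)) (continuous_mul_const _) hA <| by
    rintro _ ⟨X, hX, rfl⟩
    exact ⟨X * S, hM X hX, rfl⟩

end WeakClosure

theorem KV_is_weakly_closed_ideal_general
    {H : Type} [NormedAddCommGroup H] [InnerProductSpace ℂ H] [CompleteSpace H]
    (N : Set (H →L[ℂ] H)) (hN : IsNest N) (L : Submodule ℂ (H →L[ℂ] H))
    (hLie : ∀ T ∈ L, ∀ S ∈ nestAlg N, T * S - S * T ∈ L) :
    wClosure (Submodule.span ℂ {X : H →L[ℂ] H | ∃ P ∈ N, ∃ T ∈ L, X = P * T * (1 - P)} :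
        Set (H →L[ℂ] H)) ⊆ nestAlg N ∧
    (∀ A ∈ wClosure (Submodule.span ℂ
        {X : H →L[ℂ] H | ∃ P ∈ N, ∃ T ∈ L, X = P * T * (1 - P)} : Set (H →L[ℂ] H)),
      ∀ B ∈ wClosure (Submodule.span ℂ
        {X : H →L[ℂ] H | ∃ P ∈ N, ∃ T ∈ L, X = P * T * (1 - P)} : Set (H →L[ℂ] H)),
        A + B ∈ wClosure (Submodule.span ℂ
          {X : H →L[ℂ] H | ∃ P ∈ N, ∃ T ∈ L, X = P * T * (1 - P)} : Set (H →L[ℂ] H))) ∧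
    (∀ c : ℂ, ∀ A ∈ wClosure (Submodule.span ℂ
        {X : H →L[ℂ] H | ∃ P ∈ N, ∃ T ∈ L, X = P * T * (1 - P)} : Set (H →L[ℂ] H)),
        c • A ∈ wClosure (Submodule.span ℂ
          {X : H →L[ℂ] H | ∃ P ∈ N, ∃ T ∈ L, X = P * T * (1 - P)} : Set (H →L[ℂ] H))) ∧
    (∀ S ∈ nestAlg N, ∀ A ∈ wClosure (Submodule.span ℂ
        {X : H →L[ℂ] H | ∃ P ∈ N, ∃ T ∈ L, X = P * T * (1 - P)} : Set (H →L[ℂ] H)),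
        S * A ∈ wClosure (Submodule.span ℂ
          {X : H →L[ℂ] H | ∃ P ∈ N, ∃ T ∈ L, X = P * T * (1 - P)} : Set (H →L[ℂ] H)) ∧
        A * S ∈ wClosure (Submodule.span ℂ
          {X : H →L[ℂ] H | ∃ P ∈ N, ∃ T ∈ L, X = P * T * (1 - P)} : Set (H →L[ℂ] H))) ∧
    WClosed (wClosure (Submodule.span ℂ
        {X : H →L[ℂ] H | ∃ P ∈ N, ∃ T ∈ L, X = P * T * (1 - P)} : Set (H →L[ℂ] H))) := by
  have hK := span_nestCorners_subset_nestAlg (L := L) hN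
  refine ⟨wClosure_minimal hK (wClosed_nestAlg N), fun A hA B hB => add_mem_wClosure _ hA hB,
    fun c A hA => smul_mem_wClosure _ c hA, fun S hS A hA => ⟨?_, ?_⟩, wClosed_wClosure _⟩
  · refine const_mul_mem_wClosure (fun X hX => ?_) hA
    exact const_mul_mem_span (fun Y hY => const_mul_mem_nestCorners hN hLie hS hY) hX
  · refine mul_const_mem_wClosure (fun X hX => ?_) hA
    exact mul_const_mem_span (fun Y hY => mul_const_mem_nestCorners hN hLie hS hY) hX

/-- For a weakly closed Lie `T(N)`-module `L`, the weak closure `K_V(L)` of the span of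
`{P T P^⊥ : P ∈ N, T ∈ L}` is a weakly closed two-sided ideal of the nest algebra. -/
theorem KV_is_weakly_closed_ideal
    {H : Type} [NormedAddCommGroup H] [InnerProductSpace ℂ H] [CompleteSpace H]
    (N : Set (H →L[ℂ] H)) (hN : IsNest N) (L : Submodule ℂ (H →L[ℂ] H))
    (hLc : WClosed (L : Set (H →L[ℂ] H)))
    (hLie : ∀ T ∈ L, ∀ S ∈ nestAlg N, T * S - S * T ∈ L) :
    wClosure (Submodule.span ℂ {X : H →L[ℂ] H | ∃ P ∈ N, ∃ T ∈ L, X = P * T * (1 - P)} :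
        Set (H →L[ℂ] H)) ⊆ nestAlg N ∧
    (∀ A ∈ wClosure (Submodule.span ℂ
        {X : H →L[ℂ] H | ∃ P ∈ N, ∃ T ∈ L, X = P * T * (1 - P)} : Set (H →L[ℂ] H)),
      ∀ B ∈ wClosure (Submodule.span ℂ
        {X : H →L[ℂ] H | ∃ P ∈ N, ∃ T ∈ L, X = P * T * (1 - P)} : Set (H →L[ℂ] H)),
        A + B ∈ wClosure (Submodule.span ℂ
          {X : H →L[ℂ] H | ∃ P ∈ N, ∃ T ∈ L, X = P * T * (1 - P)} : Set (H →L[ℂ] H))) ∧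
    (∀ c : ℂ, ∀ A ∈ wClosure (Submodule.span ℂ
        {X : H →L[ℂ] H | ∃ P ∈ N, ∃ T ∈ L, X = P * T * (1 - P)} : Set (H →L[ℂ] H)),
        c • A ∈ wClosure (Submodule.span ℂ
          {X : H →L[ℂ] H | ∃ P ∈ N, ∃ T ∈ L, X = P * T * (1 - P)} : Set (H →L[ℂ] H))) ∧
    (∀ S ∈ nestAlg N, ∀ A ∈ wClosure (Submodule.span ℂ
        {X : H →L[ℂ] H | ∃ P ∈ N, ∃ T ∈ L, X = P * T * (1 - P)} : Set (H →L[ℂ] H)),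
        S * A ∈ wClosure (Submodule.span ℂ
          {X : H →L[ℂ] H | ∃ P ∈ N, ∃ T ∈ L, X = P * T * (1 - P)} : Set (H →L[ℂ] H)) ∧
        A * S ∈ wClosure (Submodule.span ℂ
          {X : H →L[ℂ] H | ∃ P ∈ N, ∃ T ∈ L, X = P * T * (1 - P)} : Set (H →L[ℂ] H))) ∧
    WClosed (wClosure (Submodule.span ℂ
        {X : H →L[ℂ] H | ∃ P ∈ N, ∃ T ∈ L, X = P * T * (1 - P)} : Set (H →L[ℂ] H))) :=
  KV_is_weakly_closed_ideal_general N hN L hLie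
end
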